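/- For every k, l ∈ {1,…,6}, the number of permutations σ ∈ S_5 with (τ₁(σ), τ₂(σ)) = (π^[k], π^[l]) equals the (k,l) entry of the 6×6 matrix with rows (2,1,1,3,3,0), (1,0,1,6,1,1), (1,1,0,1,6,1), (3,1,6,14,4,7), (3,6,1,4,14,7), (0,1,1,7,7,4). Equivalently, under the uniform distribution on S_5, P(τ₁ = π^[k], τ₂ = π^[l]) equals 1/120 times that entry. -/

import Mathlib

open Equiv

/-- The transcript of an ordered pair of permutations: `τ(π₁,π₂) = π₁⁻¹ ∘ π₂`. -/
def transcript {m : ℕ} (π₁ π₂ : Perm (Fin m)) : Perm (Fin m) := π₁⁻¹ * π₂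

/-- The ordinal pattern of a triple `y` with pairwise distinct entries: the unique
permutation `π ∈ S_3` with `y (π 0) < y (π 1) < y (π 2)`. -/
noncomputable def opattern {α : Type*} [LinearOrder α] (y : Fin 3 → α) : Perm (Fin 3) :=
  if h : ∃ π : Perm (Fin 3), y (π 0) < y (π 1) ∧ y (π 1) < y (π 2) then h.choose else 1

/-- For `σ ∈ S_N`, viewed as the tuple `(σ 0, …, σ (N-1))`, the ordinal pattern of
the window `(σ t, σ (t+1), σ (t+2))` (0-based `t`). -/
noncomputable def patN {N : ℕ} (σ : Perm (Fin N)) (t : ℕ) (h : t + 2 < N) : Perm (Fin 3) :=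
  opattern fun i : Fin 3 => σ ⟨t + i, by have := i.isLt; omega⟩

/-- The lag-1 transcript of the ordinal patterns at (0-based) windows `t` and `t+1`;
this is `τ_{t+1}` in the 1-based numbering of the paper. -/
noncomputable def tauN {N : ℕ} (σ : Perm (Fin N)) (t : ℕ) (h : t + 3 < N) : Perm (Fin 3) :=
  transcript (patN σ t (by omega)) (patN σ (t + 1) (by omega))

/-- `π^[1] = (1,2,3)`, the identity. -/
def p1 : Perm (Fin 3) := 1
/-- `π^[2] = (1,3,2)`. -/
def p2 : Perm (Fin 3) := Equiv.swap 1 2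
/-- `π^[3] = (2,1,3)`. -/
def p3 : Perm (Fin 3) := Equiv.swap 0 1
/-- `π^[4] = (2,3,1)`, i.e. `0 ↦ 1 ↦ 2 ↦ 0`. -/
def p4 : Perm (Fin 3) := Equiv.swap 0 1 * Equiv.swap 1 2
/-- `π^[5] = (3,1,2)`, i.e. `0 ↦ 2 ↦ 1 ↦ 0`. -/
def p5 : Perm (Fin 3) := Equiv.swap 1 2 * Equiv.swap 0 1
/-- `π^[6] = (3,2,1)`. -/
def p6 : Perm (Fin 3) := Equiv.swap 0 2

/-- The labelling `k ↦ π^[k+1]` of the six elements of `S_3`. -/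
def lab : Fin 6 → Perm (Fin 3) := ![p1, p2, p3, p4, p5, p6]

/-- The lag-1 bivariate transcript counts over `S_5`. -/
def M10 : Matrix (Fin 6) (Fin 6) ℕ :=
  !![2, 1, 1, 3, 3, 0;
     1, 0, 1, 6, 1, 1;
     1, 1, 0, 1, 6, 1;
     3, 1, 6, 14, 4, 7;
     3, 6, 1, 4, 14, 7;
     0, 1, 1, 7, 7, 4]

/-! A triple with distinct entries is sorted by three comparisons, so `opattern` agrees on such
triples with an explicit, computable decision tree. As `τ(π₁, π₂) = ρ` iff `π₂ = π₁ ρ`, each count then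
becomes a decidable property of the 120 permutations of `Fin 5`, which the kernel evaluates. -/

open Function

section OrdinalPattern

variable {α : Type*} [LinearOrder α]

theorem Tuple.eq_sort_of_strictMono {n : ℕ} {f : Fin n → α} {σ : Perm (Fin n)}
    (h : StrictMono (f ∘ σ)) : σ = Tuple.sort f :=
  Tuple.eq_sort_iff.2 ⟨h.monotone, fun _ _ hij heq => absurd heq (h hij).ne⟩

theorem opattern_eq_of_lt {y : Fin 3 → α} {π : Perm (Fin 3)}
    (h₀₁ : y (π 0) < y (π 1)) (h₁₂ : y (π 1) < y (π 2)) : opattern y = π := by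
  have eq_sort : ∀ ρ : Perm (Fin 3), y (ρ 0) < y (ρ 1) ∧ y (ρ 1) < y (ρ 2) →
      ρ = Tuple.sort y := fun ρ h =>
    Tuple.eq_sort_of_strictMono (Fin.strictMono_iff_lt_succ.2 (Fin.forall_fin_two.2 h))
  have hex : ∃ ρ : Perm (Fin 3), y (ρ 0) < y (ρ 1) ∧ y (ρ 1) < y (ρ 2) := ⟨π, h₀₁, h₁₂⟩
  rw [opattern, dif_pos hex]
  exact (eq_sort _ hex.choose_spec).trans (eq_sort π ⟨h₀₁, h₁₂⟩).symm

def opatternTree (y : Fin 3 → α) : Perm (Fin 3) :=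
  if y 0 < y 1 then
    if y 1 < y 2 then p1 else if y 0 < y 2 then p2 else p5
  else
    if y 0 < y 2 then p3 else if y 1 < y 2 then p4 else p6

theorem opattern_eq_opatternTree {y : Fin 3 → α} (hy : Injective y) :
    opattern y = opatternTree y := by
  have h₀₁ : y 0 ≠ y 1 := hy.ne (by decide)
  have h₀₂ : y 0 ≠ y 2 := hy.ne (by decide)
  have h₁₂ : y 1 ≠ y 2 := hy.ne (by decide)
  unfold opatternTree
  split_ifs <;> apply opattern_eq_of_lt <;>
    simp only [p1, p2, p3, p4, p5, p6, Perm.coe_one, id_eq, Perm.coe_mul, comp_apply, swap_apply_left,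
      swap_apply_right, swap_apply_of_ne_of_ne, ne_eq, Fin.reduceEq, not_false_eq_true] <;>
    order

end OrdinalPattern

section Windows

variable {N : ℕ} (σ : Perm (Fin N))

def windowPattern (t : ℕ) (h : t + 2 < N) : Perm (Fin 3) :=
  opatternTree fun i : Fin 3 => σ ⟨t + i, by omega⟩

theorem patN_eq_windowPattern (t : ℕ) (h : t + 2 < N) : patN σ t h = windowPattern σ t h :=
  opattern_eq_opatternTree fun i j hij => by simpa [Fin.ext_iff] using σ.injective hij

theorem tauN_eq_iff (t : ℕ) (h : t + 3 < N) (ρ : Perm (Fin 3)) :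
    tauN σ t h = ρ ↔ windowPattern σ (t + 1) (by omega) = windowPattern σ t (by omega) * ρ := by
  rw [tauN, transcript, patN_eq_windowPattern, patN_eq_windowPattern, inv_mul_eq_iff_eq_mul]

end Windows

theorem of_card_windowPattern_eq_M10 :
    Matrix.of (fun k l => Fintype.card {σ : Perm (Fin 5) //
      windowPattern σ 1 (by omega) = windowPattern σ 0 (by omega) * lab k ∧
      windowPattern σ 2 (by omega) = windowPattern σ 1 (by omega) * lab l}) = M10 := by
  decide +kernel

/-- For all `k, l`, the number of `σ ∈ S_5` with `(τ₁(σ), τ₂(σ)) = (π^[k], π^[l])`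
is the `(k,l)` entry of `M10`; equivalently, under the uniform distribution on
`S_5`, `P(τ₁ = π^[k], τ₂ = π^[l]) = M10 k l / 120`. -/
theorem transcript_biv1_iid : ∀ k l : Fin 6,
    Nat.card {σ : Perm (Fin 5) //
        tauN σ 0 (by omega) = lab k ∧ tauN σ 1 (by omega) = lab l} = M10 k l ∧
    (Nat.card {σ : Perm (Fin 5) //
        tauN σ 0 (by omega) = lab k ∧ tauN σ 1 (by omega) = lab l} : ℚ) / 120 =
      (1/120 : ℚ) * (M10 k l : ℚ) := by
  intro k l
  have hcard : Nat.card {σ : Perm (Fin 5) //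
      tauN σ 0 (by omega) = lab k ∧ tauN σ 1 (by omega) = lab l} = M10 k l := by
    simp only [tauN_eq_iff, Nat.card_eq_fintype_card]
    exact congrFun₂ of_card_windowPattern_eq_M10 k l
  rw [hcard]
  exact ⟨rfl, (one_div_mul_eq_div _ _).symm⟩
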